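/- arXiv:2207.03669 — 2 statements merged into one kernel-verified Lean document; each statement's English description precedes it below -/
import Mathlib

section
/- There exist equivalent action models A and B that do not satisfy the action emulation relation. Concretely, with one label a and propositions p₁, p₂: A has events x₁,x₂,x₃,x₄ with actual events x₁,x₃, relations x₁→_a x₂, x₃→_a x₄, and preconditions Pre(x₁)=Pre(x₃)=□_a p₁ ∨ □_a p₂, Pre(x₂)=⊤, Pre(x₄)=p₁∧p₂; B has events y₁,y₂,y₃,y₄ with actual events y₁,y₃, relations y₁→_a y₂, y₃→_a y₄, and preconditions Pre(y₁)=Pre(y₃)=□_a p₁ ∨ □_a p₂, Pre(y₂)=p₁, Pre(y₄)=p₂. Then A ≡ B but there is no action emulation S witnessing A ⇄ B. -/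
/-- Modal formulas over label set `A` and proposition set `P`. -/
inductive Form (A P : Type) : Type
  | top : Form A P
  | atom : P → Form A P
  | neg : Form A P → Form A P
  | or : Form A P → Form A P → Form A P
  | dia : A → Form A P → Form A P

namespace Form
variable {A P : Type}
def and (φ ψ : Form A P) : Form A P := Form.neg ((Form.neg φ).or (Form.neg ψ))
def box (a : A) (φ : Form A P) : Form A P := Form.neg (Form.dia a (Form.neg φ))
def bot : Form A P := Form.neg Form.top
def imp (φ ψ : Form A P) : Form A P := (Form.neg φ).or ψ
end Form

/-- Kripke models. -/
structure Kripke (A P : Type) : Type 1 where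
  W : Type
  val : W → P → Prop
  rel : A → W → W → Prop
  actual : Set W

variable {A P : Type}

/-- Satisfaction of a modal formula at a world. -/
def sat (M : Kripke A P) : M.W → Form A P → Prop
  | _, .top => True
  | w, .atom p => M.val w p
  | w, .neg φ => ¬ sat M w φ
  | w, .or φ ψ => sat M w φ ∨ sat M w ψ
  | w, .dia a φ => ∃ v, M.rel a w v ∧ sat M v φ

/-- Semantic entailment over all Kripke models. -/
def entails (φ ψ : Form A P) : Prop := ∀ (M : Kripke A P) (w : M.W), sat M w φ → sat M w ψ

/-- Semantic equivalence. -/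
def equivF (φ ψ : Form A P) : Prop := entails φ ψ ∧ entails ψ φ

def satisfiable (φ : Form A P) : Prop := ∃ (M : Kripke A P) (w : M.W), sat M w φ

def valid (φ : Form A P) : Prop := ∀ (M : Kripke A P) (w : M.W), sat M w φ

/-- Finite disjunction (empty disjunction is `⊥`). -/
def bigOr : List (Form A P) → Form A P
  | [] => Form.bot
  | φ :: l => φ.or (bigOr l)

/-- Finite conjunction (empty conjunction is `⊤`). -/
def bigAnd : List (Form A P) → Form A P
  | [] => Form.top
  | φ :: l => φ.and (bigAnd l)

/-- `⋀_{a ∈ A} □_a (ξ a)` for a finite label set `A`. -/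
noncomputable def boxConj [Fintype A] (ξ : A → Form A P) : Form A P :=
  bigAnd ((Finset.univ : Finset A).toList.map fun a => Form.box a (ξ a))

/-- `R` is a bisimulation between Kripke models `M` and `N`. -/
def IsBisim (M N : Kripke A P) (R : M.W → N.W → Prop) : Prop :=
  ∀ w v, R w v →
    ((∀ p, M.val w p ↔ N.val v p) ∧
     (∀ a w', M.rel a w w' → ∃ v', N.rel a v v' ∧ R w' v') ∧
     (∀ a v', N.rel a v v' → ∃ w', M.rel a w w' ∧ R w' v'))

/-- Pointed bisimilarity of Kripke models (Zig0/Zag0 on actual worlds). -/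
def Bisimilar (M N : Kripke A P) : Prop :=
  ∃ R, IsBisim M N R ∧ (∀ w ∈ M.actual, ∃ v ∈ N.actual, R w v) ∧
       (∀ v ∈ N.actual, ∃ w ∈ M.actual, R w v)

/-- Action models. -/
structure ActionModel (A P : Type) : Type 1 where
  E : Type
  pre : E → Form A P
  rel : A → E → E → Prop
  actual : Set E

/-- The update product `M ⊗ 𝔄`. -/
def update (M : Kripke A P) (𝔄 : ActionModel A P) : Kripke A P where
  W := {p : M.W × 𝔄.E // sat M p.1 (𝔄.pre p.2)}
  val w p := M.val w.1.1 p
  rel a w v := M.rel a w.1.1 v.1.1 ∧ 𝔄.rel a w.1.2 v.1.2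
  actual := {w | w.1.1 ∈ M.actual ∧ w.1.2 ∈ 𝔄.actual}

/-- Action model equivalence: same updating effect (up to bisimilarity) on every Kripke model. -/
def AMEquiv (𝔄 𝔅 : ActionModel A P) : Prop :=
  ∀ M : Kripke A P, Bisimilar (update M 𝔄) (update M 𝔅)

/-- `S` is an action bisimulation between action models `𝔄` and `𝔅`. -/
def IsActBisim (𝔄 𝔅 : ActionModel A P) (S : 𝔄.E → 𝔅.E → Prop) : Prop :=
  ∀ x y, S x y →
    (equivF (𝔄.pre x) (𝔅.pre y) ∧
     (∀ a x', 𝔄.rel a x x' → satisfiable ((𝔄.pre x).and (Form.dia a (𝔄.pre x'))) →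
        ∃ y', 𝔅.rel a y y' ∧ S x' y') ∧
     (∀ a y', 𝔅.rel a y y' → satisfiable ((𝔅.pre y).and (Form.dia a (𝔅.pre y'))) →
        ∃ x', 𝔄.rel a x x' ∧ S x' y'))

/-- Action bisimilarity of action models (with Zig0/Zag0 on actual events). -/
def ActBisimilar (𝔄 𝔅 : ActionModel A P) : Prop :=
  ∃ S, IsActBisim 𝔄 𝔅 S ∧ (∀ x ∈ 𝔄.actual, ∃ y ∈ 𝔅.actual, S x y) ∧
       (∀ y ∈ 𝔅.actual, ∃ x ∈ 𝔄.actual, S x y)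

/-- Zig of the generalized action emulation:
`η(x,y) ⊨ □_a (Pre^𝔄(x') → ⋁_{y →_a y'} (Pre^𝔅(y') ∧ η(x',y')))`, rendered semantically. -/
def GAEZig (𝔄 𝔅 : ActionModel A P) (η : 𝔄.E → 𝔅.E → Form A P) : Prop :=
  ∀ (a : A) (x : 𝔄.E) (y : 𝔅.E) (x' : 𝔄.E), 𝔄.rel a x x' →
    ∀ (M : Kripke A P) (w v : M.W), sat M w (η x y) → M.rel a w v → sat M v (𝔄.pre x') →
      ∃ y', 𝔅.rel a y y' ∧ sat M v (𝔅.pre y') ∧ sat M v (η x' y')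

/-- Zag of the generalized action emulation. -/
def GAEZag (𝔄 𝔅 : ActionModel A P) (η : 𝔄.E → 𝔅.E → Form A P) : Prop :=
  ∀ (a : A) (x : 𝔄.E) (y : 𝔅.E) (y' : 𝔅.E), 𝔅.rel a y y' →
    ∀ (M : Kripke A P) (w v : M.W), sat M w (η x y) → M.rel a w v → sat M v (𝔅.pre y') →
      ∃ x', 𝔄.rel a x x' ∧ sat M v (𝔄.pre x') ∧ sat M v (η x' y')

/-- Zig0 of the generalized action emulation:
`Pre^𝔄(x) ⊨ ⋁_{y ∈ E₀^𝔅} (Pre^𝔅(y) ∧ η(x,y))` for actual `x`. -/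
def GAEZig0 (𝔄 𝔅 : ActionModel A P) (η : 𝔄.E → 𝔅.E → Form A P) : Prop :=
  ∀ x ∈ 𝔄.actual, ∀ (M : Kripke A P) (w : M.W), sat M w (𝔄.pre x) →
    ∃ y ∈ 𝔅.actual, sat M w (𝔅.pre y) ∧ sat M w (η x y)

/-- Zag0 of the generalized action emulation. -/
def GAEZag0 (𝔄 𝔅 : ActionModel A P) (η : 𝔄.E → 𝔅.E → Form A P) : Prop :=
  ∀ y ∈ 𝔅.actual, ∀ (M : Kripke A P) (w : M.W), sat M w (𝔅.pre y) →
    ∃ x ∈ 𝔄.actual, sat M w (𝔄.pre x) ∧ sat M w (η x y)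

/-- `η` is a generalized action emulation witnessing `𝔄 ⇄_G 𝔅`. -/
def IsGAE (𝔄 𝔅 : ActionModel A P) (η : 𝔄.E → 𝔅.E → Form A P) : Prop :=
  GAEZig 𝔄 𝔅 η ∧ GAEZag 𝔄 𝔅 η ∧ GAEZig0 𝔄 𝔅 η ∧ GAEZag0 𝔄 𝔅 η

/-- `S` is a propositional action emulation witnessing `𝔄 ⇄_P 𝔅`
(Consistency, Zig, Zag, Zig0, Zag0; disjunctions rendered semantically). -/
def IsPAEW (𝔄 𝔅 : ActionModel A P) (S : 𝔄.E → 𝔅.E → Prop) : Prop :=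
  (∀ x y, S x y → satisfiable ((𝔄.pre x).and (𝔅.pre y))) ∧
  (∀ (a : A) x y x', S x y → 𝔄.rel a x x' →
     ∀ (M : Kripke A P) (w : M.W), sat M w (𝔄.pre x') →
       ∃ y', 𝔅.rel a y y' ∧ S x' y' ∧ sat M w (𝔅.pre y')) ∧
  (∀ (a : A) x y y', S x y → 𝔅.rel a y y' →
     ∀ (M : Kripke A P) (w : M.W), sat M w (𝔅.pre y') →
       ∃ x', 𝔄.rel a x x' ∧ S x' y' ∧ sat M w (𝔄.pre x')) ∧
  (∀ x ∈ 𝔄.actual, ∀ (M : Kripke A P) (w : M.W), sat M w (𝔄.pre x) →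
     ∃ y ∈ 𝔅.actual, S x y ∧ sat M w (𝔅.pre y)) ∧
  (∀ y ∈ 𝔅.actual, ∀ (M : Kripke A P) (w : M.W), sat M w (𝔅.pre y) →
     ∃ x ∈ 𝔄.actual, S x y ∧ sat M w (𝔄.pre x))

/-- `S` is an action emulation witnessing `𝔄 ⇄ 𝔅`
(Consistency, Zig, Zag, Zig0, Zag0; disjunctions and boxes rendered semantically). -/
def IsAEW (𝔄 𝔅 : ActionModel A P) (S : 𝔄.E → 𝔅.E → Prop) : Prop :=
  (∀ x y, S x y → satisfiable ((𝔄.pre x).and (𝔅.pre y))) ∧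
  (∀ (a : A) x y x', S x y → 𝔄.rel a x x' →
     ∀ (M : Kripke A P) (w v : M.W), sat M w (𝔄.pre x) → sat M w (𝔅.pre y) →
       M.rel a w v → sat M v (𝔄.pre x') →
       ∃ y', 𝔅.rel a y y' ∧ S x' y' ∧ sat M v (𝔅.pre y')) ∧
  (∀ (a : A) x y y', S x y → 𝔅.rel a y y' →
     ∀ (M : Kripke A P) (w v : M.W), sat M w (𝔄.pre x) → sat M w (𝔅.pre y) →
       M.rel a w v → sat M v (𝔅.pre y') →
       ∃ x', 𝔄.rel a x x' ∧ S x' y' ∧ sat M v (𝔄.pre x')) ∧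
  (∀ x ∈ 𝔄.actual, ∀ (M : Kripke A P) (w : M.W), sat M w (𝔄.pre x) →
     ∃ y ∈ 𝔅.actual, S x y ∧ sat M w (𝔅.pre y)) ∧
  (∀ y ∈ 𝔅.actual, ∀ (M : Kripke A P) (w : M.W), sat M w (𝔅.pre y) →
     ∃ x ∈ 𝔄.actual, S x y ∧ sat M w (𝔄.pre x))

/-- `L₀`: formulas `α` such that if `α` is satisfiable and `α ⊨ □_a φ` then `φ` is valid. -/
def L0 : Set (Form A P) :=
  {α | satisfiable α → ∀ (a : A) (φ : Form A P), entails α (Form.box a φ) → valid φ}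

/-- `Φ` is `Ψ`-regular. -/
def Regular (Φ Ψ : Set (Form A P)) : Prop :=
  ∀ φ ∈ Φ, ∀ ψ ∈ Ψ, entails ψ φ ∨ entails ψ φ.neg

/-- `Φ` is `Ψ`-basis: every `φ ∈ Φ` is equivalent to a disjunction of a subset of `Ψ`
(disjunction rendered semantically). -/
def IsBasisFor (Φ Ψ : Set (Form A P)) : Prop :=
  ∀ φ ∈ Φ, ∃ Ψ' ⊆ Ψ, ∀ (M : Kripke A P) (w : M.W), sat M w φ ↔ ∃ ψ ∈ Ψ', sat M w ψ

/-- `Φ` is `Ψ`-discrete: if `φ ∈ Φ` entails a finite disjunction `⋁_l ⋀_a □_a ξ_l^a`, then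
`φ ⊨ ⋁_l ⋁ G(⋀_a □_a ξ_l^a, Ψ)` (outer disjunctions rendered semantically). -/
def Discrete [Fintype A] (Φ Ψ : Set (Form A P)) : Prop :=
  ∀ φ ∈ Φ, ∀ (L : ℕ) (ξ : Fin L → A → Form A P),
    entails φ (bigOr ((List.finRange L).map fun l => boxConj (ξ l))) →
    ∀ (M : Kripke A P) (w : M.W), sat M w φ →
      ∃ (l : Fin L), ∃ ψ ∈ Ψ, entails ψ (boxConj (ξ l)) ∧ sat M w ψ

/-- `Φ` is `Ψ`-known: if `φ ∈ Φ` and `φ ⊨ □_a ξ`, then `φ ⊨ □_a ⋁ G(ξ, Ψ)`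
(inner disjunction rendered semantically). -/
def Known (Φ Ψ : Set (Form A P)) : Prop :=
  ∀ φ ∈ Φ, ∀ (a : A) (χ : Form A P), entails φ (Form.box a χ) →
    ∀ (M : Kripke A P) (w v : M.W), sat M w φ → M.rel a w v →
      ∃ ψ ∈ Ψ, entails ψ χ ∧ sat M v ψ

/-- `R_a^𝔄(x)`. -/
def Rset (𝔄 : ActionModel A P) (a : A) (x : 𝔄.E) : Set 𝔄.E :=
  {y | satisfiable ((𝔄.pre x).and (Form.dia a (𝔄.pre y)))}

/-- `Q_a^𝔄(x)`. -/
def Qset (𝔄 : ActionModel A P) (a : A) (x : 𝔄.E) : Set 𝔄.E :=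
  {y | 𝔄.rel a x y ∧ satisfiable ((𝔄.pre x).and (Form.dia a (𝔄.pre y)))}

/-- Modal depth. -/
def depth : Form A P → ℕ
  | .top => 0
  | .atom _ => 0
  | .neg φ => depth φ
  | .or φ ψ => max (depth φ) (depth ψ)
  | .dia _ φ => depth φ + 1

/-- Subformulas. -/
def Subf : Form A P → List (Form A P)
  | .top => [.top]
  | .atom p => [.atom p]
  | .neg φ => .neg φ :: Subf φ
  | .or φ ψ => .or φ ψ :: (Subf φ ++ Subf ψ)
  | .dia a φ => .dia a φ :: Subf φ

/-- Single negation. -/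
def singleNeg : Form A P → Form A P
  | .neg φ => φ
  | φ => .neg φ

/-- Closure under subformulas and single negations. -/
def closureF (φ : Form A P) : Set (Form A P) :=
  {χ | χ ∈ Subf φ ∨ ∃ ψ ∈ Subf φ, χ = singleNeg ψ}

/-- `p₁`. -/
def p1 : Form Unit (Fin 2) := Form.atom 0
/-- `p₂`. -/
def p2 : Form Unit (Fin 2) := Form.atom 1
/-- `□_a p₁ ∨ □_a p₂`. -/
def boxOr : Form Unit (Fin 2) := (Form.box () p1).or (Form.box () p2)

/-- The action model `A` of the counterexample: events `x₁,x₂,x₃,x₄` (as `0,1,2,3`),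
actual events `x₁,x₃`, relations `x₁ →_a x₂`, `x₃ →_a x₄`. -/
def cexA : ActionModel Unit (Fin 2) where
  E := Fin 4
  pre := ![boxOr, Form.top, boxOr, p1.and p2]
  rel := fun _ x y => (x = 0 ∧ y = 1) ∨ (x = 2 ∧ y = 3)
  actual := {0, 2}

/-- The action model `B` of the counterexample: events `y₁,y₂,y₃,y₄` (as `0,1,2,3`),
actual events `y₁,y₃`, relations `y₁ →_a y₂`, `y₃ →_a y₄`. -/
def cexB : ActionModel Unit (Fin 2) where
  E := Fin 4
  pre := ![boxOr, p1, boxOr, p2]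
  rel := fun _ x y => (x = 0 ∧ y = 1) ∨ (x = 2 ∧ y = 3)
  actual := {0, 2}


lemma sat_and' {A P : Type} {M : Kripke A P} {w : M.W} {φ ψ : Form A P} :
    sat M w (φ.and ψ) ↔ sat M w φ ∧ sat M w ψ := by
  simp [Form.and, sat]

lemma sat_boxOr' {M : Kripke Unit (Fin 2)} {w : M.W} :
    sat M w boxOr ↔ (∀ v, M.rel () w v → sat M v p1) ∨ (∀ v, M.rel () w v → sat M v p2) := by
  simp [boxOr, Form.box, sat]

section AMEq

variable {M : Kripke Unit (Fin 2)}

instance : DecidableEq cexA.E := inferInstanceAs (DecidableEq (Fin 4))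
instance : DecidableEq cexB.E := inferInstanceAs (DecidableEq (Fin 4))
instance (n : ℕ) : OfNat cexA.E n := inferInstanceAs (OfNat (Fin 4) n)
instance (n : ℕ) : OfNat cexB.E n := inferInstanceAs (OfNat (Fin 4) n)

/-- `w ⊨ □ p₁`. -/
def BB1 (M : Kripke Unit (Fin 2)) (w : M.W) : Prop := ∀ v, M.rel () w v → sat M v p1
/-- `w ⊨ □ p₂`. -/
def BB2 (M : Kripke Unit (Fin 2)) (w : M.W) : Prop := ∀ v, M.rel () w v → sat M v p2

/-- The bisimulation between `M ⊗ A` and `M ⊗ B`. -/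
def cexR (M : Kripke Unit (Fin 2)) (u : (update M cexA).W) (v : (update M cexB).W) : Prop :=
  u.1.1 = v.1.1 ∧
  ((u.1.2 = 0 ∧ v.1.2 = 0 ∧ BB1 M u.1.1) ∨
   (u.1.2 = 0 ∧ v.1.2 = 2 ∧ BB2 M u.1.1) ∨
   (u.1.2 = 2 ∧ v.1.2 = 2 ∧ BB1 M u.1.1) ∨
   (u.1.2 = 2 ∧ v.1.2 = 0 ∧ BB2 M u.1.1) ∨
   ((u.1.2 = 1 ∨ u.1.2 = 3) ∧ (v.1.2 = 1 ∨ v.1.2 = 3)))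

lemma cexR_isBisim : IsBisim (update M cexA) (update M cexB) (cexR M) := by
  rintro u v ⟨heq, hc⟩
  refine ⟨fun p => by show M.val u.1.1 p ↔ M.val v.1.1 p; rw [heq], ?_, ?_⟩
  · -- Zig
    rintro a w' ⟨hMr, hAr⟩
    cases a
    rcases hc with ⟨hu, hv, hB⟩ | ⟨hu, hv, hB⟩ | ⟨hu, hv, hB⟩ | ⟨hu, hv, hB⟩ | ⟨hu, hv⟩
    · rcases hAr with ⟨h1, h2⟩ | ⟨h1, h2⟩
      · exact ⟨⟨(w'.1.1, 1), hB w'.1.1 hMr⟩, ⟨heq ▸ hMr, Or.inl ⟨hv, rfl⟩⟩,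
          rfl, Or.inr (Or.inr (Or.inr (Or.inr ⟨Or.inl h2, Or.inl rfl⟩)))⟩
      · exact absurd (hu.symm.trans h1) (fun h => absurd (congrArg Fin.val h) (by decide))
    · rcases hAr with ⟨h1, h2⟩ | ⟨h1, h2⟩
      · exact ⟨⟨(w'.1.1, 3), hB w'.1.1 hMr⟩, ⟨heq ▸ hMr, Or.inr ⟨hv, rfl⟩⟩,
          rfl, Or.inr (Or.inr (Or.inr (Or.inr ⟨Or.inl h2, Or.inr rfl⟩)))⟩
      · exact absurd (hu.symm.trans h1) (fun h => absurd (congrArg Fin.val h) (by decide))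
    · rcases hAr with ⟨h1, h2⟩ | ⟨h1, h2⟩
      · exact absurd (hu.symm.trans h1) (fun h => absurd (congrArg Fin.val h) (by decide))
      · have hs : sat M w'.1.1 ((cexA.pre (3:Fin 4)) ) := h2 ▸ w'.2
        have hp2 : sat M w'.1.1 p2 := (sat_and'.mp hs).2
        exact ⟨⟨(w'.1.1, 3), hp2⟩, ⟨heq ▸ hMr, Or.inr ⟨hv, rfl⟩⟩,
          rfl, Or.inr (Or.inr (Or.inr (Or.inr ⟨Or.inr h2, Or.inr rfl⟩)))⟩
    · rcases hAr with ⟨h1, h2⟩ | ⟨h1, h2⟩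
      · exact absurd (hu.symm.trans h1) (fun h => absurd (congrArg Fin.val h) (by decide))
      · have hs : sat M w'.1.1 ((cexA.pre (3:Fin 4)) ) := h2 ▸ w'.2
        have hp1 : sat M w'.1.1 p1 := (sat_and'.mp hs).1
        exact ⟨⟨(w'.1.1, 1), hp1⟩, ⟨heq ▸ hMr, Or.inl ⟨hv, rfl⟩⟩,
          rfl, Or.inr (Or.inr (Or.inr (Or.inr ⟨Or.inr h2, Or.inl rfl⟩)))⟩
    · rcases hAr with ⟨h1, _⟩ | ⟨h1, _⟩ <;> rcases hu with hu | hu <;>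
        exact absurd (hu.symm.trans h1) (fun h => absurd (congrArg Fin.val h) (by decide))
  · -- Zag
    rintro a v' ⟨hMr, hBr⟩
    cases a
    have hMr' : M.rel () u.1.1 v'.1.1 := heq ▸ hMr
    rcases hc with ⟨hu, hv, hB⟩ | ⟨hu, hv, hB⟩ | ⟨hu, hv, hB⟩ | ⟨hu, hv, hB⟩ | ⟨hu, hv⟩
    · rcases hBr with ⟨h1, h2⟩ | ⟨h1, h2⟩
      · exact ⟨⟨(v'.1.1, 1), trivial⟩, ⟨hMr', Or.inl ⟨hu, rfl⟩⟩,
          rfl, Or.inr (Or.inr (Or.inr (Or.inr ⟨Or.inl rfl, Or.inl h2⟩)))⟩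
      · exact absurd (hv.symm.trans h1) (fun h => absurd (congrArg Fin.val h) (by decide))
    · rcases hBr with ⟨h1, h2⟩ | ⟨h1, h2⟩
      · exact absurd (hv.symm.trans h1) (fun h => absurd (congrArg Fin.val h) (by decide))
      · exact ⟨⟨(v'.1.1, 1), trivial⟩, ⟨hMr', Or.inl ⟨hu, rfl⟩⟩,
          rfl, Or.inr (Or.inr (Or.inr (Or.inr ⟨Or.inl rfl, Or.inr h2⟩)))⟩
    · rcases hBr with ⟨h1, h2⟩ | ⟨h1, h2⟩
      · exact absurd (hv.symm.trans h1) (fun h => absurd (congrArg Fin.val h) (by decide))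
      · have hp2 : sat M v'.1.1 p2 := by
          have h := v'.2; rw [show v'.1.2 = 3 from h2] at h; exact h
        have hp1 : sat M v'.1.1 p1 := hB v'.1.1 hMr'
        exact ⟨⟨(v'.1.1, 3), sat_and'.mpr ⟨hp1, hp2⟩⟩, ⟨hMr', Or.inr ⟨hu, rfl⟩⟩,
          rfl, Or.inr (Or.inr (Or.inr (Or.inr ⟨Or.inr rfl, Or.inr h2⟩)))⟩
    · rcases hBr with ⟨h1, h2⟩ | ⟨h1, h2⟩
      · have hp1 : sat M v'.1.1 p1 := by
          have h := v'.2; rw [show v'.1.2 = 1 from h2] at h; exact h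
        have hp2 : sat M v'.1.1 p2 := hB v'.1.1 hMr'
        exact ⟨⟨(v'.1.1, 3), sat_and'.mpr ⟨hp1, hp2⟩⟩, ⟨hMr', Or.inr ⟨hu, rfl⟩⟩,
          rfl, Or.inr (Or.inr (Or.inr (Or.inr ⟨Or.inr rfl, Or.inl h2⟩)))⟩
      · exact absurd (hv.symm.trans h1) (fun h => absurd (congrArg Fin.val h) (by decide))
    · rcases hBr with ⟨h1, _⟩ | ⟨h1, _⟩ <;> rcases hv with hv | hv <;>
        exact absurd (hv.symm.trans h1) (fun h => absurd (congrArg Fin.val h) (by decide))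

lemma cex_amequiv : AMEquiv cexA cexB := by
  intro M
  refine ⟨cexR M, cexR_isBisim, ?_, ?_⟩
  · rintro u ⟨hwAct, heAct⟩
    rcases heAct with he | he
    · have hs : sat M u.1.1 boxOr := by have h := u.2; rw [show u.1.2 = 0 from he] at h; exact h
      rcases sat_boxOr'.mp hs with hB | hB
      · exact ⟨⟨(u.1.1, 0), hs⟩, ⟨hwAct, Or.inl rfl⟩, rfl, Or.inl ⟨he, rfl, hB⟩⟩
      · exact ⟨⟨(u.1.1, 2), hs⟩, ⟨hwAct, Or.inr rfl⟩, rfl, Or.inr (Or.inl ⟨he, rfl, hB⟩)⟩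
    · have hs : sat M u.1.1 boxOr := by have h := u.2; rw [show u.1.2 = 2 from he] at h; exact h
      rcases sat_boxOr'.mp hs with hB | hB
      · exact ⟨⟨(u.1.1, 2), hs⟩, ⟨hwAct, Or.inr rfl⟩, rfl,
          Or.inr (Or.inr (Or.inl ⟨he, rfl, hB⟩))⟩
      · exact ⟨⟨(u.1.1, 0), hs⟩, ⟨hwAct, Or.inl rfl⟩, rfl,
          Or.inr (Or.inr (Or.inr (Or.inl ⟨he, rfl, hB⟩)))⟩
  · rintro v ⟨hwAct, heAct⟩
    rcases heAct with he | he
    · have hs : sat M v.1.1 boxOr := by have h := v.2; rw [show v.1.2 = 0 from he] at h; exact h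
      rcases sat_boxOr'.mp hs with hB | hB
      · exact ⟨⟨(v.1.1, 0), hs⟩, ⟨hwAct, Or.inl rfl⟩, rfl, Or.inl ⟨rfl, he, hB⟩⟩
      · exact ⟨⟨(v.1.1, 2), hs⟩, ⟨hwAct, Or.inr rfl⟩, rfl,
          Or.inr (Or.inr (Or.inr (Or.inl ⟨rfl, he, hB⟩)))⟩
    · have hs : sat M v.1.1 boxOr := by have h := v.2; rw [show v.1.2 = 2 from he] at h; exact h
      rcases sat_boxOr'.mp hs with hB | hB
      · exact ⟨⟨(v.1.1, 2), hs⟩, ⟨hwAct, Or.inr rfl⟩, rfl,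
          Or.inr (Or.inr (Or.inl ⟨rfl, he, hB⟩))⟩
      · exact ⟨⟨(v.1.1, 0), hs⟩, ⟨hwAct, Or.inl rfl⟩, rfl, Or.inr (Or.inl ⟨rfl, he, hB⟩)⟩

end AMEq

/-- A trivial one-point Kripke model with no relations. -/
def Mtriv : Kripke Unit (Fin 2) := ⟨Unit, fun _ _ => False, fun _ _ _ => False, ∅⟩

/-- Model with two worlds `0 → 1` where world `1` satisfies only `p₂`. -/
def Mp2 : Kripke Unit (Fin 2) :=
  ⟨Fin 2, fun w p => w = 1 ∧ p = 1, fun _ w v => w = 0 ∧ v = 1, ∅⟩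

/-- Model with two worlds `0 → 1` where world `1` satisfies only `p₁`. -/
def Mp1 : Kripke Unit (Fin 2) :=
  ⟨Fin 2, fun w p => w = 1 ∧ p = 0, fun _ w v => w = 0 ∧ v = 1, ∅⟩

instance (n : ℕ) : OfNat Mp1.W n := inferInstanceAs (OfNat (Fin 2) n)
instance (n : ℕ) : OfNat Mp2.W n := inferInstanceAs (OfNat (Fin 2) n)

lemma cex_no_aew : ¬ ∃ S : cexA.E → cexB.E → Prop, IsAEW cexA cexB S := by
  rintro ⟨S, _, zig, _, zig0, _⟩
  have hsTriv : sat Mtriv () (cexA.pre (0:Fin 4)) := by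
    exact Or.inl (by simp [Form.box, sat, Mtriv])
  obtain ⟨y, hyAct, hS, _⟩ := zig0 (0:Fin 4) (Or.inl rfl) Mtriv () hsTriv
  rcases hyAct with hy | hy
  · -- y = 0 : use Mp2
    subst hy
    have hb : sat Mp2 (0:Fin 2) boxOr := by
      refine Or.inr ?_
      simp [Form.box, sat, Mp2, p2]
    obtain ⟨y', hrel, _, hsat⟩ := zig () 0 0 1 hS (Or.inl ⟨rfl, rfl⟩) Mp2 0 1 hb hb
      ⟨rfl, rfl⟩ trivial
    rcases hrel with ⟨_, h2⟩ | ⟨h1, _⟩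
    · subst h2
      exact absurd hsat (fun h => absurd (show (1:Fin 2) = 1 ∧ (0:Fin 2) = 1 from h).2 (by decide))
    · exact absurd h1 (fun h => absurd (congrArg Fin.val h) (by decide))
  · -- y = 2 : use Mp1
    subst hy
    have hb : sat Mp1 (0:Fin 2) boxOr := by
      refine Or.inl ?_
      simp [Form.box, sat, Mp1, p1]
    obtain ⟨y', hrel, _, hsat⟩ := zig () 0 2 1 hS (Or.inl ⟨rfl, rfl⟩) Mp1 0 1 hb hb
      ⟨rfl, rfl⟩ trivial
    rcases hrel with ⟨h1, _⟩ | ⟨_, h2⟩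
    · exact absurd h1 (fun h => absurd (congrArg Fin.val h) (by decide))
    · subst h2
      exact absurd hsat (fun h => absurd (show (1:Fin 2) = 1 ∧ (1:Fin 2) = 0 from h).2 (by decide))


/-- `A ≡ B`, but no action emulation witnesses `A ⇄ B`. -/
theorem equiv_but_no_action_emulation :
    AMEquiv cexA cexB ∧ ¬ ∃ S : cexA.E → cexB.E → Prop, IsAEW cexA cexB S :=
  ⟨cex_amequiv, cex_no_aew⟩
end

section
/- Let Φ, Ψ be sets of modal formulas such that: the preconditions of action models A and B are F-basis and F-regular, F is Θ-discrete, and Θ is F-known. If there is a generalized action emulation of the form η(x,y) = ⋀_a □_a ξ_{x,y}^a satisfying Zig0 and Zag0, then replacing each η(x,y) by η'(x,y) := ⋁{θ ∈ Θ : θ ⊨ η(x,y)} still satisfies Zig0 and Zag0. -/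
variable {A P : Type}

/-- Zig0 for a set-valued emulation `σ` (each `σ(x,y) ⊆ L` standing for the disjunction
`⋁ σ(x,y)`, rendered semantically). -/
def SigmaZig0 (𝔄 𝔅 : ActionModel A P) (σ : 𝔄.E → 𝔅.E → Set (Form A P)) : Prop :=
  ∀ x ∈ 𝔄.actual, ∀ (M : Kripke A P) (w : M.W), sat M w (𝔄.pre x) →
    ∃ y ∈ 𝔅.actual, sat M w (𝔅.pre y) ∧ ∃ θ ∈ σ x y, sat M w θ

/-- Zag0 for a set-valued emulation. -/
def SigmaZag0 (𝔄 𝔅 : ActionModel A P) (σ : 𝔄.E → 𝔅.E → Set (Form A P)) : Prop :=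
  ∀ y ∈ 𝔅.actual, ∀ (M : Kripke A P) (w : M.W), sat M w (𝔅.pre y) →
    ∃ x ∈ 𝔄.actual, sat M w (𝔄.pre x) ∧ ∃ θ ∈ σ x y, sat M w θ

/-! ### Auxiliary machinery: ultraproducts of Kripke models and modal compactness -/

section Aux

open Filter

lemma sat_bigOr {M : Kripke A P} {w : M.W} :
    ∀ (l : List (Form A P)), sat M w (bigOr l) ↔ ∃ φ ∈ l, sat M w φ := by
  intro l
  induction l with
  | nil => simp [bigOr, Form.bot, sat]
  | cons φ l ih => simp [bigOr, sat, ih]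

/-- Ultraproduct of a family of Kripke models along an ultrafilter. -/
def prodModel {ι : Type} (Mo : ι → Kripke A P) (U : Ultrafilter ι) : Kripke A P where
  W := ∀ i, (Mo i).W
  val w p := {i | (Mo i).val (w i) p} ∈ U
  rel a w v := {i | (Mo i).rel a (w i) (v i)} ∈ U
  actual := ∅

/-- Łoś's theorem for modal logic over Kripke models. -/
lemma los {ι : Type} (Mo : ι → Kripke A P) (U : Ultrafilter ι) :
    ∀ (φ : Form A P) (w : ∀ i, (Mo i).W),
      sat (prodModel Mo U) w φ ↔ {i | sat (Mo i) (w i) φ} ∈ U := by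
  intro φ
  induction φ with
  | top =>
      intro w
      have : {i | sat (Mo i) (w i) Form.top} = Set.univ := by ext i; simp [sat]
      rw [this]
      simp only [sat, true_iff]
      exact Filter.univ_mem
  | atom p =>
      intro w
      simp [sat, prodModel]
  | neg φ ih =>
      intro w
      have : {i | sat (Mo i) (w i) φ.neg} = {i | sat (Mo i) (w i) φ}ᶜ := by
        ext i; simp [sat]
      rw [this]
      simp only [sat, ih w, Ultrafilter.compl_mem_iff_notMem]
  | or φ ψ ihφ ihψ =>
      intro w
      have : {i | sat (Mo i) (w i) (φ.or ψ)} =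
          {i | sat (Mo i) (w i) φ} ∪ {i | sat (Mo i) (w i) ψ} := by
        ext i; simp [sat]
      rw [this]
      simp only [sat, ihφ w, ihψ w, Ultrafilter.union_mem_iff]
  | dia a φ ih =>
      intro w
      constructor
      · rintro ⟨v, hrel, hsat⟩
        have h1 : {i | (Mo i).rel a (w i) (v i)} ∈ U := hrel
        have h2 : {i | sat (Mo i) (v i) φ} ∈ U := (ih v).1 hsat
        refine mem_of_superset (inter_mem h1 h2) ?_
        rintro i ⟨hr, hs⟩
        exact ⟨v i, hr, hs⟩
      · intro h
        classical
        let v : ∀ i, (Mo i).W := fun i =>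
          if h' : ∃ v', (Mo i).rel a (w i) v' ∧ sat (Mo i) v' φ then h'.choose else w i
        have hv : ∀ i ∈ {i | ∃ v', (Mo i).rel a (w i) v' ∧ sat (Mo i) v' φ},
            (Mo i).rel a (w i) (v i) ∧ sat (Mo i) (v i) φ := by
          intro i hi
          have hi' : ∃ v', (Mo i).rel a (w i) v' ∧ sat (Mo i) v' φ := hi
          simp only [v]
          rw [dif_pos hi']
          exact hi'.choose_spec
        refine ⟨v, ?_, (ih v).2 ?_⟩
        · exact mem_of_superset h (fun i hi => (hv i hi).1)
        · exact mem_of_superset h (fun i hi => (hv i hi).2)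

/-- Semantic compactness for disjunctions: if every world satisfying `ψ` satisfies some
`g y`, then finitely many `g y` suffice uniformly. -/
lemma modal_compactness {E : Type} (ψ : Form A P) (g : E → Form A P)
    (h : ∀ (M : Kripke A P) (w : M.W), sat M w ψ → ∃ y, sat M w (g y)) :
    ∃ S : Finset E, ∀ (M : Kripke A P) (w : M.W), sat M w ψ → ∃ y ∈ S, sat M w (g y) := by
  classical
  by_contra hc
  push_neg at hc
  choose Mo wo hsat hns using hc
  let U : Ultrafilter (Finset E) := Ultrafilter.of atTop
  have hle : (U : Filter (Finset E)) ≤ atTop := Ultrafilter.of_le _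
  have hψ : sat (prodModel Mo U) (fun S => wo S) ψ := by
    refine (los Mo U ψ _).2 ?_
    have : {i : Finset E | sat (Mo i) (wo i) ψ} = Set.univ := by
      ext i; simp [hsat i]
    rw [this]; exact univ_mem
  obtain ⟨y, hy⟩ := h (prodModel Mo U) _ hψ
  have h1 : {S : Finset E | sat (Mo S) (wo S) (g y)} ∈ U := (los Mo U (g y) _).1 hy
  have h2 : {S : Finset E | y ∈ S} ∈ U := by
    refine hle (mem_of_superset (Ici_mem_atTop ({y} : Finset E)) ?_)
    intro S hS
    exact hS (Finset.mem_singleton_self y)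
  have h3 : ({S : Finset E | sat (Mo S) (wo S) (g y)} ∩ {S : Finset E | y ∈ S}) ∈ U :=
    inter_mem h1 h2
  have hemp : ({S : Finset E | sat (Mo S) (wo S) (g y)} ∩ {S : Finset E | y ∈ S}) = ∅ := by
    ext S
    simp only [Set.mem_inter_iff, Set.mem_setOf_eq, Set.mem_empty_iff_false, iff_false,
      not_and]
    intro hs hyS
    exact hns S y hyS hs
  rw [hemp] at h3
  exact empty_notMem (U : Filter (Finset E)) h3

/-- The key step: from a basis element `ψ` of a precondition, a semantic covering by
box-conjunctions indexed by events yields a `Θ`-witness via discreteness. -/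
lemma key_step [Fintype A] {E : Type} (F Θ : Set (Form A P))
    (hdisc : Discrete F Θ) (ψ : Form A P) (hψF : ψ ∈ F)
    (ζ : E → A → Form A P) (Good : E → Prop)
    (hcover : ∀ (N : Kripke A P) (u : N.W), sat N u ψ →
      ∃ y : {y : E // Good y}, sat N u (boxConj (ζ y.1)))
    (M : Kripke A P) (w : M.W) (hw : sat M w ψ) :
    ∃ y : E, Good y ∧ ∃ θ ∈ Θ, entails θ (boxConj (ζ y)) ∧ sat M w θ := by
  classical
  obtain ⟨S, hS⟩ := modal_compactness ψ (fun y : {y : E // Good y} => boxConj (ζ y.1)) hcover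
  set ys := S.toList with hys
  set L := ys.length with hL
  have hent : entails ψ (bigOr ((List.finRange L).map
      fun l => boxConj (fun a => ζ (ys.get l).1 a))) := by
    intro N u hu
    obtain ⟨y, hyS, hysat⟩ := hS N u hu
    have hymem : y ∈ ys := by
      rw [hys]; exact Finset.mem_toList.2 hyS
    obtain ⟨l, hl⟩ := List.mem_iff_get.1 hymem
    refine (sat_bigOr _).2 ⟨boxConj (fun a => ζ (ys.get l).1 a), ?_, ?_⟩
    · exact List.mem_map.2 ⟨l, List.mem_finRange l, rfl⟩
    · rw [hl]
      convert hysat using 2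
  obtain ⟨l, θ, hθΘ, hθent, hθsat⟩ :=
    hdisc ψ hψF L (fun l => fun a => ζ (ys.get l).1 a) hent M w hw
  exact ⟨(ys.get l).1, (ys.get l).2, θ, hθΘ, hθent, hθsat⟩

end Aux

/-- if the preconditions of `𝔄` and `𝔅` are `F`-basis and `F`-regular, `F` is
`Θ`-discrete and `Θ` is `F`-known, and `η(x,y) = ⋀_a □_a ξ_{x,y}^a` satisfies Zig0 and Zag0,
then `η'(x,y) := ⋁ G(η(x,y), Θ)` also satisfies Zig0 and Zag0. -/
theorem cover_stable [Fintype A] (𝔄 𝔅 : ActionModel A P) (F Θ : Set (Form A P))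
    (hbasis : IsBasisFor (Set.range 𝔄.pre ∪ Set.range 𝔅.pre) F)
    (hreg : Regular (Set.range 𝔄.pre ∪ Set.range 𝔅.pre) F)
    (hdisc : Discrete F Θ) (hknown : Known Θ F)
    (ξ : 𝔄.E → 𝔅.E → A → Form A P)
    (hZig0 : GAEZig0 𝔄 𝔅 (fun x y => boxConj (ξ x y)))
    (hZag0 : GAEZag0 𝔄 𝔅 (fun x y => boxConj (ξ x y))) :
    SigmaZig0 𝔄 𝔅 (fun x y => {θ ∈ Θ | entails θ (boxConj (ξ x y))}) ∧
    SigmaZag0 𝔄 𝔅 (fun x y => {θ ∈ Θ | entails θ (boxConj (ξ x y))}) := by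
  constructor
  · -- Zig0
    intro x hx M w hw
    obtain ⟨Ψ', hΨ'F, hiff⟩ := hbasis (𝔄.pre x) (Or.inl ⟨x, rfl⟩)
    obtain ⟨ψ, hψΨ', hψw⟩ := (hiff M w).1 hw
    have hψF : ψ ∈ F := hΨ'F hψΨ'
    have hψpre : entails ψ (𝔄.pre x) := fun N u hu => (hiff N u).2 ⟨ψ, hψΨ', hu⟩
    have hcover : ∀ (N : Kripke A P) (u : N.W), sat N u ψ →
        ∃ y : {y : 𝔅.E // y ∈ 𝔅.actual ∧ entails ψ (𝔅.pre y)},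
          sat N u (boxConj (ξ x y.1)) := by
      intro N u hu
      obtain ⟨y₀, hy₀, hpre₀, hη₀⟩ := hZig0 x hx N u (hψpre N u hu)
      have hdec := hreg (𝔅.pre y₀) (Or.inr ⟨y₀, rfl⟩) ψ hψF
      rcases hdec with hpos | hneg
      · exact ⟨⟨y₀, hy₀, hpos⟩, hη₀⟩
      · exact absurd hpre₀ (hneg N u hu)
    obtain ⟨y, ⟨hyact, hypre⟩, θ, hθΘ, hθent, hθsat⟩ :=
      key_step F Θ hdisc ψ hψF (fun y => ξ x y)
        (fun y => y ∈ 𝔅.actual ∧ entails ψ (𝔅.pre y)) hcover M w hψw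
    exact ⟨y, hyact, hypre M w hψw, θ, ⟨hθΘ, hθent⟩, hθsat⟩
  · -- Zag0
    intro y hy M w hw
    obtain ⟨Ψ', hΨ'F, hiff⟩ := hbasis (𝔅.pre y) (Or.inr ⟨y, rfl⟩)
    obtain ⟨ψ, hψΨ', hψw⟩ := (hiff M w).1 hw
    have hψF : ψ ∈ F := hΨ'F hψΨ'
    have hψpre : entails ψ (𝔅.pre y) := fun N u hu => (hiff N u).2 ⟨ψ, hψΨ', hu⟩
    have hcover : ∀ (N : Kripke A P) (u : N.W), sat N u ψ →
        ∃ x : {x : 𝔄.E // x ∈ 𝔄.actual ∧ entails ψ (𝔄.pre x)},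
          sat N u (boxConj (ξ x.1 y)) := by
      intro N u hu
      obtain ⟨x₀, hx₀, hpre₀, hη₀⟩ := hZag0 y hy N u (hψpre N u hu)
      have hdec := hreg (𝔄.pre x₀) (Or.inl ⟨x₀, rfl⟩) ψ hψF
      rcases hdec with hpos | hneg
      · exact ⟨⟨x₀, hx₀, hpos⟩, hη₀⟩
      · exact absurd hpre₀ (hneg N u hu)
    obtain ⟨x, ⟨hxact, hxpre⟩, θ, hθΘ, hθent, hθsat⟩ :=
      key_step F Θ hdisc ψ hψF (fun x => ξ x y)
        (fun x => x ∈ 𝔄.actual ∧ entails ψ (𝔄.pre x)) hcover M w hψw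
    exact ⟨x, hxact, hxpre M w hψw, θ, ⟨hθΘ, hθent⟩, hθsat⟩
end
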